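/- Assume Σ_{m ≤ M, q | m} m K_m(a) ≪ M^{3/2}(Mq^{-2})^γ (Mq)^{o(1)} uniformly in q ≥ 1, with 0 < γ ≤ 1/2. Then Σ_{m=1}^{M} K_m(a) φ(m) ≪ M^{3/2+γ+o(1)}, where φ is the Euler totient function. -/

import Mathlib

/-!
Writing `φ(m) = m ∑_{d ∣ m} μ(d)/d` and swapping the sums turns `∑_{m ≤ M} K_m(a) φ(m)` into
`∑_{d ≤ M} (μ(d)/d) ∑_{m ≤ M, d ∣ m} m K_m(a)`. The hypothesis with exponent `δ = min ε γ` bounds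
the `d`-th term by `M^(3/2 + γ + δ) d^(δ - 2γ - 1) ≤ M^(3/2 + γ + δ) d^(-1-γ)`, and
`∑ d^(-1-γ)` converges because `γ > 0`.
-/

open Finset

noncomputable def Kl (m : ℕ) (a : ℤ) : ℂ :=
  (1 / Real.sqrt m) * ∑ x ∈ (Finset.range m).filter (fun x => Nat.Coprime x m),
    Complex.exp (2 * Real.pi * Complex.I *
      (((a * (x : ℤ) + ((((x : ZMod m)⁻¹ : ZMod m)).val : ℤ) : ℤ) : ℂ) / (m : ℂ)))

open ArithmeticFunction
open scoped ArithmeticFunction.Moebius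

theorem Nat.totient_eq_mul_sum_moebius_div {K : Type*} [Field K] [CharZero K] (m : ℕ) :
    (m.totient : K) = m * ∑ d ∈ m.divisors, (μ d : K) / d := by
  rcases Nat.eq_zero_or_pos m with rfl | hm
  · simp
  have hinv := (sum_eq_iff_sum_mul_moebius_eq (R := K) (f := fun n ↦ (n.totient : K))
    (g := fun n ↦ (n : K))).mp (fun n _ ↦ mod_cast n.sum_totient) m hm
  rw [← hinv, Nat.sum_divisorsAntidiagonal (fun d e ↦ (μ d : K) * e), mul_sum]
  refine sum_congr rfl fun d hd ↦ ?_
  have hd0 : (d : K) ≠ 0 := by exact_mod_cast (Nat.pos_of_mem_divisors hd).ne'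
  rw [Nat.cast_div (Nat.dvd_of_mem_divisors hd) hd0]
  field_simp

theorem sum_mul_totient_eq_sum_moebius_div_mul {K : Type*} [Field K] [CharZero K]
    (f : ℕ → K) (M : ℕ) :
    ∑ m ∈ Icc 1 M, f m * m.totient =
      ∑ d ∈ Icc 1 M, (μ d : K) / d * ∑ m ∈ Icc 1 M with d ∣ m, (m : K) * f m := by
  have hswap : ∀ m d, (m ∈ Icc 1 M ∧ d ∈ m.divisors) ↔
      (m ∈ {m ∈ Icc 1 M | d ∣ m} ∧ d ∈ Icc 1 M) := by
    intro m d
    simp only [mem_Icc, mem_filter, Nat.mem_divisors]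
    constructor
    · rintro ⟨⟨h1, hM⟩, hdm, -⟩
      exact ⟨⟨⟨h1, hM⟩, hdm⟩, Nat.pos_of_dvd_of_pos hdm h1, (Nat.le_of_dvd h1 hdm).trans hM⟩
    · rintro ⟨⟨⟨h1, hM⟩, hdm⟩, -⟩
      exact ⟨⟨h1, hM⟩, hdm, by omega⟩
  simp_rw [Nat.totient_eq_mul_sum_moebius_div, mul_sum]
  rw [sum_comm' hswap]
  exact sum_congr rfl fun d _ ↦ sum_congr rfl fun m _ ↦ by ring

theorem inv_mul_rpow_mul_div_sq_rpow_mul_mul_rpow_le {M d α γ δ : ℝ} (hM : 0 < M) (hd : 1 ≤ d)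
    (hδγ : δ ≤ γ) :
    d⁻¹ * (M ^ α * (M / d ^ 2) ^ γ * (M * d) ^ δ) ≤ M ^ (α + γ + δ) * d ^ (-(1 + γ)) := by
  have hd0 : 0 < d := one_pos.trans_le hd
  have hsplit : d⁻¹ * (M ^ α * (M / d ^ 2) ^ γ * (M * d) ^ δ) =
      M ^ (α + γ + δ) * d ^ (δ - 2 * γ - 1) := by
    rw [Real.div_rpow hM.le (by positivity), Real.mul_rpow hM.le hd0.le, ← Real.rpow_natCast,
      ← Real.rpow_mul hd0.le, Nat.cast_ofNat, Real.rpow_add hM, Real.rpow_add hM,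
      Real.rpow_sub hd0, Real.rpow_sub hd0, Real.rpow_one]
    field_simp
  rw [hsplit]
  gcongr
  linarith

theorem norm_moebius_div_le (d : ℕ) : ‖(μ d : ℂ) / d‖ ≤ (d : ℝ)⁻¹ := by
  rw [norm_div, Complex.norm_intCast, Complex.norm_natCast, div_eq_mul_inv]
  exact mul_le_of_le_one_left (by positivity) (mod_cast abs_moebius_le_one)

theorem norm_sum_mul_totient_le (f : ℕ → ℂ) {C α γ δ : ℝ} (hC : 0 ≤ C) (hγ : 0 < γ)
    (hδγ : δ ≤ γ) (M : ℕ)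
    (hf : ∀ q ∈ Icc 1 M, ‖∑ m ∈ Icc 1 M with q ∣ m, (m : ℂ) * f m‖ ≤
      C * (M : ℝ) ^ α * ((M : ℝ) / (q : ℝ) ^ 2) ^ γ * ((M : ℝ) * (q : ℝ)) ^ δ) :
    ‖∑ m ∈ Icc 1 M, f m * m.totient‖ ≤
      C * (∑' d : ℕ, (d : ℝ) ^ (-(1 + γ))) * (M : ℝ) ^ (α + γ + δ) := by
  have hterm : ∀ d ∈ Icc 1 M, ‖(μ d : ℂ) / d * ∑ m ∈ Icc 1 M with d ∣ m, (m : ℂ) * f m‖ ≤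
      C * (M : ℝ) ^ (α + γ + δ) * (d : ℝ) ^ (-(1 + γ)) := by
    intro d hd
    have hd1 : (1 : ℝ) ≤ d := by exact_mod_cast (mem_Icc.1 hd).1
    have hM : (0 : ℝ) < M := by exact_mod_cast (mem_Icc.1 hd).1.trans (mem_Icc.1 hd).2
    calc _ ≤ (d : ℝ)⁻¹ * (C * (M : ℝ) ^ α * ((M : ℝ) / (d : ℝ) ^ 2) ^ γ * ((M : ℝ) * d) ^ δ) :=
          (norm_mul_le _ _).trans <|
            mul_le_mul (norm_moebius_div_le d) (hf d hd) (norm_nonneg _) (by positivity)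
      _ = C * ((d : ℝ)⁻¹ * ((M : ℝ) ^ α * ((M : ℝ) / (d : ℝ) ^ 2) ^ γ * ((M : ℝ) * d) ^ δ)) := by
          ring
      _ ≤ C * ((M : ℝ) ^ (α + γ + δ) * (d : ℝ) ^ (-(1 + γ))) :=
          mul_le_mul_of_nonneg_left (inv_mul_rpow_mul_div_sq_rpow_mul_mul_rpow_le hM hd1 hδγ) hC
      _ = _ := by ring
  rw [sum_mul_totient_eq_sum_moebius_div_mul]
  calc _ ≤ ∑ d ∈ Icc 1 M, C * (M : ℝ) ^ (α + γ + δ) * (d : ℝ) ^ (-(1 + γ)) :=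
        norm_sum_le_of_le _ hterm
    _ = C * (M : ℝ) ^ (α + γ + δ) * ∑ d ∈ Icc 1 M, (d : ℝ) ^ (-(1 + γ)) := (mul_sum _ _ _).symm
    _ ≤ C * (M : ℝ) ^ (α + γ + δ) * ∑' d : ℕ, (d : ℝ) ^ (-(1 + γ)) := by
        gcongr
        exact Summable.sum_le_tsum _ (fun d _ ↦ by positivity)
          (Real.summable_nat_rpow.2 (by linarith))
    _ = _ := by ring

theorem stmt_9_general (a : ℤ) (γ : ℝ) (hγ0 : 0 < γ)
    (H : ∀ ε : ℝ, 0 < ε → ∃ C : ℝ, ∀ q M : ℕ, 1 ≤ q → 1 ≤ M →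
      ‖∑ m ∈ (Finset.Icc 1 M).filter (fun m => q ∣ m), (m : ℂ) * Kl m a‖ ≤
        C * (M : ℝ) ^ ((3 : ℝ) / 2) * ((M : ℝ) / (q : ℝ) ^ 2) ^ γ * ((M : ℝ) * (q : ℝ)) ^ ε) :
    ∀ ε : ℝ, 0 < ε → ∃ C : ℝ, ∀ M : ℕ, 1 ≤ M →
      ‖∑ m ∈ Finset.Icc 1 M, Kl m a * (Nat.totient m : ℂ)‖ ≤
        C * (M : ℝ) ^ ((3 : ℝ) / 2 + γ + ε) := by
  intro ε hε
  obtain ⟨C, hC⟩ := H (min ε γ) (lt_min hε hγ0)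
  refine ⟨max C 0 * ∑' d : ℕ, (d : ℝ) ^ (-(1 + γ)), fun M hM ↦ ?_⟩
  have hbound := norm_sum_mul_totient_le (Kl · a) (le_max_right C 0) hγ0 (min_le_right ε γ) M
    fun q hq ↦ (hC q M (mem_Icc.1 hq).1 hM).trans (by gcongr; exact le_max_left C 0)
  refine hbound.trans ?_
  gcongr
  · exact_mod_cast hM
  · exact min_le_left ε γ

/-- Assuming the Kloosterman average bound in progressions with weight `m`, Kloosterman sums
do not correlate with the Euler totient: `∑_{m ≤ M} K_m(a) φ(m) ≪ M^(3/2 + γ + o(1))`. -/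
theorem stmt_9 (a : ℤ) (ha : a ≠ 0) (γ : ℝ) (hγ0 : 0 < γ) (hγ1 : γ ≤ 1 / 2)
    (H : ∀ ε : ℝ, 0 < ε → ∃ C : ℝ, ∀ q M : ℕ, 1 ≤ q → 1 ≤ M →
      ‖∑ m ∈ (Finset.Icc 1 M).filter (fun m => q ∣ m), (m : ℂ) * Kl m a‖ ≤
        C * (M : ℝ) ^ ((3 : ℝ) / 2) * ((M : ℝ) / (q : ℝ) ^ 2) ^ γ * ((M : ℝ) * (q : ℝ)) ^ ε) :
    ∀ ε : ℝ, 0 < ε → ∃ C : ℝ, ∀ M : ℕ, 1 ≤ M →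
      ‖∑ m ∈ Finset.Icc 1 M, Kl m a * (Nat.totient m : ℂ)‖ ≤
        C * (M : ℝ) ^ ((3 : ℝ) / 2 + γ + ε) :=
  stmt_9_general a γ hγ0 H
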